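/- Let λ be a real number and Δ ≥ 3. Let U be a unicyclic graph with n vertices and maximum degree Δ having a vertex a with deg_U(a) = Δ such that: a does not lie on the cycle of U, a is adjacent to Δ-1 leaves, there is a vertex b on the cycle of U with d_U(a,b) = 1 and deg_U(b) = 3, and every vertex c ∉ {a,b} satisfies 1 ≤ deg_U(c) ≤ 2. Then GRM_λ(U) = (Δ+λ)(Δ+Δλ+2) + (n-Δ)(2+λ)² + 2(2+λ). -/

import Mathlib

open SimpleGraph

/-- Degree of a vertex (classical decidability). -/
noncomputable def deg {V : Type*} [Fintype V] (G : SimpleGraph V) (v : V) : ℕ :=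
  letI := Classical.decEq V
  letI : DecidableRel G.Adj := Classical.decRel _
  G.degree v

/-- Maximum degree of a graph (classical decidability). -/
noncomputable def maxDeg {V : Type*} [Fintype V] (G : SimpleGraph V) : ℕ :=
  letI := Classical.decEq V
  letI : DecidableRel G.Adj := Classical.decRel _
  G.maxDegree

/-- The general reduced second Zagreb index
`GRM_λ(G) = Σ_{ab ∈ E(G)} (deg a + λ)(deg b + λ)`. -/
noncomputable def GRM {V : Type*} [Fintype V] (l : ℝ) (G : SimpleGraph V) : ℝ :=
  letI := Classical.decEq V
  letI : DecidableRel G.Adj := Classical.decRel _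
  ∑ e ∈ G.edgeFinset,
    Sym2.lift ⟨fun a b => ((G.degree a : ℝ) + l) * ((G.degree b : ℝ) + l),
      fun a b => by ring⟩ e

/-- A unicyclic graph: connected with exactly as many edges as vertices. -/
def IsUnicyclic {V : Type*} [Fintype V] (G : SimpleGraph V) : Prop :=
  G.Connected ∧ G.edgeSet.ncard = Fintype.card V

/-- A vertex lies on a cycle of `G`. -/
def OnCycle {V : Type*} (G : SimpleGraph V) (v : V) : Prop :=
  ∃ (u : V) (w : G.Walk u u), w.IsCycle ∧ v ∈ w.support

/-! Because `U` has as many edges as vertices, the handshake lemma shows that the vertices other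
than `a` and `b` have degree `2`, except for exactly `deg a + deg b - 4 = Δ - 1` leaves; the
`Δ - 1` pendant neighbours of `a` are therefore all the leaves of `U`. Hence an edge away from `a`
has end-degrees `(3, 2)` if it meets `b` and `(2, 2)` otherwise, and `GRM_λ(U)` is the sum of the
`Δ` terms at `a`, two terms `(3 + λ)(2 + λ)` at `b` and `n - Δ - 2` terms `(2 + λ)²`. -/

open Finset

namespace SimpleGraph

variable {V : Type*} [Fintype V] [DecidableEq V] (G : SimpleGraph V) [DecidableRel G.Adj]

lemma image_mk_filter_neighborFinset (v : V)
    (p : Sym2 V → Prop) [DecidablePred p] :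
    {w ∈ G.neighborFinset v | p s(v, w)}.image (s(v, ·))
      = {e ∈ G.edgeFinset | p e ∧ v ∈ e} := by
  ext e
  induction e with
  | _ x y =>
    simp only [mem_image, mem_filter, mem_neighborFinset, mem_edgeFinset, mem_edgeSet,
      Sym2.mem_iff]
    constructor
    · rintro ⟨w, ⟨hw, hp⟩, he⟩
      rcases Sym2.eq_iff.mp he with ⟨rfl, rfl⟩ | ⟨rfl, rfl⟩
      · exact ⟨hw, hp, Or.inl rfl⟩
      · exact ⟨hw.symm, Sym2.eq_swap ▸ hp, Or.inr rfl⟩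
    · rintro ⟨hxy, hp, rfl | rfl⟩
      · exact ⟨y, ⟨hxy, hp⟩, rfl⟩
      · exact ⟨x, ⟨hxy.symm, Sym2.eq_swap ▸ hp⟩, Sym2.eq_swap⟩

lemma sum_filter_mem_edgeFinset {M : Type*} [AddCommMonoid M] (F : Sym2 V → M) (v : V)
    (p : Sym2 V → Prop) [DecidablePred p] :
    ∑ e ∈ G.edgeFinset with p e ∧ v ∈ e, F e
      = ∑ w ∈ G.neighborFinset v with p s(v, w), F s(v, w) := by
  rw [← image_mk_filter_neighborFinset, sum_image fun _ _ _ _ => Sym2.congr_right.mp]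

lemma card_filter_mem_edgeFinset (v : V) (p : Sym2 V → Prop) [DecidablePred p] :
    #{e ∈ G.edgeFinset | p e ∧ v ∈ e} = #{w ∈ G.neighborFinset v | p s(v, w)} := by
  rw [← image_mk_filter_neighborFinset, card_image_of_injective _ fun _ _ => Sym2.congr_right.mp]

end SimpleGraph

section

variable {V : Type*} [Fintype V] (G : SimpleGraph V) [DecidableRel G.Adj]

lemma deg_eq_degree (v : V) : deg G v = G.degree v := by
  unfold deg
  convert rfl

def degWeight (l : ℝ) : Sym2 V → ℝ :=
  Sym2.lift
    ⟨fun x y => ((G.degree x : ℝ) + l) * ((G.degree y : ℝ) + l), fun _ _ => mul_comm _ _⟩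

@[simp] lemma degWeight_mk (l : ℝ) (x y : V) :
    degWeight G l s(x, y) = ((G.degree x : ℝ) + l) * ((G.degree y : ℝ) + l) := rfl

lemma GRM_eq_sum_degWeight [DecidableEq V] (l : ℝ) :
    GRM l G = ∑ e ∈ G.edgeFinset, degWeight G l e := by
  unfold GRM degWeight
  convert rfl

lemma IsUnicyclic.card_edgeFinset [DecidableEq V] (hG : IsUnicyclic G) :
    #G.edgeFinset = Fintype.card V := by
  rw [← hG.2, Set.ncard_eq_toFinset_card', Set.toFinset_card, edgeFinset, Set.toFinset_card]

end

section

variable {V : Type*} [Fintype V] [DecidableEq V] {G : SimpleGraph V} [DecidableRel G.Adj] {a b : V}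

lemma card_degree_eq_one_add_four (hab : a ≠ b) (hE : #G.edgeFinset = Fintype.card V)
    (hdeg : ∀ c, c ≠ a → c ≠ b → 1 ≤ G.degree c ∧ G.degree c ≤ 2) :
    #{c ∈ univ \ {a, b} | G.degree c = 1} + 4 = G.degree a + G.degree b := by
  set S : Finset V := univ \ {a, b}
  have hS : #S + 2 = Fintype.card V := by
    rw [card_univ_sdiff, ← card_pair hab, Nat.sub_add_cancel (card_le_univ _)]
  have hsplit : ∑ c ∈ S, G.degree c + (G.degree a + G.degree b) = 2 * Fintype.card V := by
    rw [← sum_pair (f := fun v => G.degree v) hab, sum_sdiff (subset_univ _),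
      G.sum_degrees_eq_twice_card_edges, hE]
  have hpad : ∑ c ∈ S, G.degree c + #{c ∈ S | G.degree c = 1} = 2 * #S := by
    rw [card_filter, ← sum_add_distrib, mul_comm, ← smul_eq_mul, ← sum_const]
    refine sum_congr rfl fun c hc => ?_
    simp only [S, mem_sdiff, mem_univ, mem_insert, mem_singleton, true_and, not_or] at hc
    have := hdeg c hc.1 hc.2
    split_ifs <;> omega
  omega

lemma adj_of_degree_eq_one (hab : G.Adj a b) (hb : G.degree b = 3)
    (hL : #{v ∈ G.neighborFinset a | G.degree v = 1} + 1 = G.degree a)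
    (hE : #G.edgeFinset = Fintype.card V)
    (hdeg : ∀ c, c ≠ a → c ≠ b → 1 ≤ G.degree c ∧ G.degree c ≤ 2)
    {c : V} (hca : c ≠ a) (hcb : c ≠ b) (hc : G.degree c = 1) : G.Adj a c := by
  have hsub :
      {v ∈ G.neighborFinset a | G.degree v = 1} ⊆ {c ∈ univ \ {a, b} | G.degree c = 1} := by
    intro v hv
    simp only [mem_filter, mem_neighborFinset] at hv
    simp only [mem_filter, mem_sdiff, mem_univ, mem_insert, mem_singleton, true_and, not_or]
    exact ⟨⟨hv.1.ne.symm, by rintro rfl; omega⟩, hv.2⟩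
  have hcount := card_degree_eq_one_add_four hab.ne hE hdeg
  have hc' : c ∈ {c ∈ univ \ {a, b} | G.degree c = 1} := by simp [hca, hcb, hc]
  rw [← eq_of_subset_of_card_le hsub (by omega)] at hc'
  simpa using (mem_filter.mp hc').1

lemma degree_eq_two_of_adj
    (hleaf : ∀ c, c ≠ a → c ≠ b → G.degree c = 1 → G.Adj a c)
    (hdeg : ∀ c, c ≠ a → c ≠ b → 1 ≤ G.degree c ∧ G.degree c ≤ 2)
    {c u : V} (hca : c ≠ a) (hcb : c ≠ b) (hcu : G.Adj c u) (hua : u ≠ a) :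
    G.degree c = 2 := by
  have := hdeg c hca hcb
  by_contra h
  have hac := hleaf c hca hcb (by omega)
  have : 2 ≤ G.degree c := by
    rw [← card_neighborFinset_eq_degree, ← card_pair hua]
    exact card_le_card (by simp [insert_subset_iff, hcu, hac.symm])
  omega

lemma neighborFinset_eq_insert_leaves (hab : G.Adj a b) (hb : G.degree b = 3)
    (hL : #{v ∈ G.neighborFinset a | G.degree v = 1} + 1 = G.degree a) :
    G.neighborFinset a = insert b {v ∈ G.neighborFinset a | G.degree v = 1} := by
  have hbL : b ∉ {v ∈ G.neighborFinset a | G.degree v = 1} := by simp [hb]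
  refine (eq_of_subset_of_card_le ?_ ?_).symm
  · exact insert_subset ((mem_neighborFinset _ _ _).mpr hab) (filter_subset _ _)
  · rw [card_insert_of_notMem hbL, hL, card_neighborFinset_eq_degree]

lemma sum_degWeight_filter_mem (l : ℝ) (hab : G.Adj a b) (hb : G.degree b = 3)
    (hL : #{v ∈ G.neighborFinset a | G.degree v = 1} + 1 = G.degree a) :
    ∑ e ∈ G.edgeFinset with a ∈ e, degWeight G l e
      = (G.degree a + l) * (3 + l)
        + #{v ∈ G.neighborFinset a | G.degree v = 1} * ((G.degree a + l) * (1 + l)) := by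
  have hN := neighborFinset_eq_insert_leaves hab hb hL
  set L := {v ∈ G.neighborFinset a | G.degree v = 1}
  have hbL : b ∉ L := by simp [L, hb]
  have hleaf : ∀ v ∈ L, degWeight G l s(a, v) = (G.degree a + l) * (1 + l) := by
    intro v hv
    simp [(mem_filter.mp hv).2]
  have := G.sum_filter_mem_edgeFinset (degWeight G l) a (fun _ => True)
  simp only [true_and, filter_true] at this
  rw [this, hN, sum_insert hbL, degWeight_mk, hb, sum_congr rfl hleaf, sum_const, nsmul_eq_mul]
  push_cast
  ring

lemma filter_neighborFinset_notMem_eq_erase (hab : G.Adj a b) :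
    {w ∈ G.neighborFinset b | a ∉ s(b, w)} = (G.neighborFinset b).erase a := by
  ext w
  simp [Sym2.mem_iff, hab.ne, eq_comm, and_comm]

lemma card_filter_notMem_mem_edgeFinset (hab : G.Adj a b) (hb : G.degree b = 3) :
    #{e ∈ G.edgeFinset | a ∉ e ∧ b ∈ e} = 2 := by
  rw [card_filter_mem_edgeFinset, filter_neighborFinset_notMem_eq_erase hab,
    card_erase_of_mem ((mem_neighborFinset _ _ _).mpr hab.symm), card_neighborFinset_eq_degree, hb]

lemma sum_degWeight_filter_notMem_mem (l : ℝ) (hab : G.Adj a b) (hb : G.degree b = 3)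
    (hleaf : ∀ c, c ≠ a → c ≠ b → G.degree c = 1 → G.Adj a c)
    (hdeg : ∀ c, c ≠ a → c ≠ b → 1 ≤ G.degree c ∧ G.degree c ≤ 2) :
    ∑ e ∈ G.edgeFinset with a ∉ e ∧ b ∈ e, degWeight G l e = 2 * ((3 + l) * (2 + l)) := by
  have hw : ∀ w ∈ (G.neighborFinset b).erase a, degWeight G l s(b, w) = (3 + l) * (2 + l) := by
    intro w hw
    obtain ⟨hwa, hbw⟩ := mem_erase.mp hw
    rw [mem_neighborFinset] at hbw
    rw [degWeight_mk, hb, degree_eq_two_of_adj hleaf hdeg hwa hbw.ne' hbw.symm hab.ne']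
    norm_num
  rw [sum_filter_mem_edgeFinset, filter_neighborFinset_notMem_eq_erase hab, sum_congr rfl hw,
    sum_const, card_erase_of_mem ((mem_neighborFinset _ _ _).mpr hab.symm),
    card_neighborFinset_eq_degree, hb]
  norm_num

lemma degWeight_of_notMem (l : ℝ)
    (hleaf : ∀ c, c ≠ a → c ≠ b → G.degree c = 1 → G.Adj a c)
    (hdeg : ∀ c, c ≠ a → c ≠ b → 1 ≤ G.degree c ∧ G.degree c ≤ 2)
    {e : Sym2 V} (he : e ∈ G.edgeFinset) (hae : a ∉ e) (hbe : b ∉ e) :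
    degWeight G l e = (2 + l) ^ 2 := by
  induction e with
  | _ x y =>
    simp only [mem_edgeFinset, mem_edgeSet] at he
    simp only [Sym2.mem_iff, not_or] at hae hbe
    rw [degWeight_mk, degree_eq_two_of_adj hleaf hdeg (Ne.symm hae.1) (Ne.symm hbe.1) he
      (Ne.symm hae.2), degree_eq_two_of_adj hleaf hdeg (Ne.symm hae.2) (Ne.symm hbe.2) he.symm
      (Ne.symm hae.1)]
    push_cast
    ring

theorem sum_degWeight_edgeFinset (l : ℝ) (hab : G.Adj a b) (hb : G.degree b = 3)
    (hL : #{v ∈ G.neighborFinset a | G.degree v = 1} + 1 = G.degree a)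
    (hE : #G.edgeFinset = Fintype.card V)
    (hdeg : ∀ c, c ≠ a → c ≠ b → 1 ≤ G.degree c ∧ G.degree c ≤ 2) :
    ∑ e ∈ G.edgeFinset, degWeight G l e
      = (G.degree a + l) * (G.degree a + G.degree a * l + 2)
        + (Fintype.card V - G.degree a) * (2 + l) ^ 2 + 2 * (2 + l) := by
  have hleaf c := adj_of_degree_eq_one (c := c) hab hb hL hE hdeg
  set rest := {e ∈ G.edgeFinset | a ∉ e ∧ b ∉ e}
  have hrest : ∑ e ∈ rest, degWeight G l e = #rest * (2 + l) ^ 2 := by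
    rw [sum_congr rfl fun e he => ?_, sum_const, nsmul_eq_mul]
    obtain ⟨he, hae, hbe⟩ := mem_filter.mp he
    exact degWeight_of_notMem l hleaf hdeg he hae hbe
  have hcard : G.degree a + 2 + #rest = Fintype.card V := by
    rw [← hE, ← card_filter_add_card_filter_not (s := G.edgeFinset) (p := (a ∈ ·)),
      ← card_filter_add_card_filter_not (s := {e ∈ G.edgeFinset | a ∉ e}) (p := (b ∈ ·)),
      filter_filter, filter_filter, card_filter_notMem_mem_edgeFinset hab hb,
      ← card_incidenceFinset_eq_degree, incidenceFinset_eq_filter, add_assoc]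
  rw [← sum_filter_add_sum_filter_not _ (a ∈ ·),
    ← sum_filter_add_sum_filter_not {e ∈ G.edgeFinset | a ∉ e} (b ∈ ·), filter_filter,
    filter_filter, sum_degWeight_filter_mem l hab hb hL,
    sum_degWeight_filter_notMem_mem l hab hb hleaf hdeg, hrest, ← hcard, ← hL]
  push_cast
  ring

end

theorem stmt12_general {V : Type*} [Fintype V] (l : ℝ) (n Δ : ℕ)
    (U : SimpleGraph V) (hU : IsUnicyclic U)
    (hcard : Fintype.card V = n)
    (a : V) (ha : deg U a = Δ)
    (hleaves : {v : V | U.Adj a v ∧ deg U v = 1}.ncard = Δ - 1)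
    (b : V) (hdist : U.dist a b = 1) (hdegb : deg U b = 3)
    (hother : ∀ c : V, c ≠ a → c ≠ b → 1 ≤ deg U c ∧ deg U c ≤ 2) :
    GRM l U = ((Δ : ℝ) + l) * ((Δ : ℝ) + (Δ : ℝ) * l + 2)
      + ((n : ℝ) - (Δ : ℝ)) * (2 + l) ^ 2 + 2 * (2 + l) := by
  classical
  have hab : U.Adj a b := dist_eq_one_iff_adj.mp hdist
  simp only [deg_eq_degree] at ha hdegb hleaves hother
  have hL : #{v ∈ U.neighborFinset a | U.degree v = 1} + 1 = U.degree a := by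
    have hpos : 0 < U.degree a := U.degree_pos_iff_exists_adj a |>.mpr ⟨b, hab⟩
    rw [← Set.ncard_coe_finset, coe_filter]
    simp only [mem_neighborFinset]
    omega
  rw [GRM_eq_sum_degWeight, sum_degWeight_edgeFinset l hab hdegb hL hU.card_edgeFinset hother, ha,
    hcard]

theorem stmt12 {V : Type*} [Fintype V] (l : ℝ) (n Δ : ℕ) (hΔ3 : 3 ≤ Δ)
    (U : SimpleGraph V) (hU : IsUnicyclic U)
    (hcard : Fintype.card V = n) (hmax : maxDeg U = Δ)
    (a : V) (ha : deg U a = Δ) (hacyc : ¬ OnCycle U a)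
    (hleaves : {v : V | U.Adj a v ∧ deg U v = 1}.ncard = Δ - 1)
    (b : V) (hbcyc : OnCycle U b) (hdist : U.dist a b = 1) (hdegb : deg U b = 3)
    (hother : ∀ c : V, c ≠ a → c ≠ b → 1 ≤ deg U c ∧ deg U c ≤ 2) :
    GRM l U = ((Δ : ℝ) + l) * ((Δ : ℝ) + (Δ : ℝ) * l + 2)
      + ((n : ℝ) - (Δ : ℝ)) * (2 + l) ^ 2 + 2 * (2 + l) :=
  stmt12_general l n Δ U hU hcard a ha hleaves b hdist hdegb hother
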